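/- arXiv:2502.11674 — 4 statements merged into one kernel-verified Lean document; each statement's English description precedes it below -/
import Mathlib

section
/- Let G be a graph and U a set of vertices. If the rooted treedepth td(G,U) is at most t, then G contains no U-rooted path minor on 2^t vertices. -/
open SimpleGraph

/-- `x` is a (reflexive) ancestor of `y` in the tree `T` rooted at `r`,
expressed metrically: `x` lies on the unique `r`–`y` path. -/
def AncIn {V : Type*} (T : SimpleGraph V) (r x y : V) : Prop :=
  T.dist r x + T.dist x y = T.dist r y

/-- A tree-layout of `G`: a rooted tree on the vertex set of `G` such that the endpoints
of every edge of `G` are in ancestor-descendant relation. -/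
structure TreeLayout {V : Type*} (G : SimpleGraph V) where
  tree : SimpleGraph V
  isTree : tree.IsTree
  root : V
  layout : ∀ ⦃x y : V⦄, G.Adj x y → AncIn tree root x y ∨ AncIn tree root y x

namespace TreeLayout

variable {V : Type*} {G : SimpleGraph V}

/-- `x` is an ancestor of `y` (reflexively) in the tree-layout. -/
def Anc (L : TreeLayout G) (x y : V) : Prop := AncIn L.tree L.root x y

def StrictAnc (L : TreeLayout G) (x y : V) : Prop := L.Anc x y ∧ x ≠ y

/-- The bandwidth of the tree-layout is at most `k`: neighbours in `G` are at
tree-distance at most `k`. -/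
def BandwidthLE (L : TreeLayout G) (k : ℕ) : Prop :=
  ∀ ⦃x y : V⦄, G.Adj x y → L.tree.dist x y ≤ k

/-- The interval `[a,b]` of the tree-layout: vertices on the tree path from `a` to `b`
(for `a` an ancestor of `b`). -/
def interval (L : TreeLayout G) (a b : V) : Set V := {z : V | L.Anc a z ∧ L.Anc z b}

end TreeLayout

/-- Treebandwidth: the minimum bandwidth over tree-layouts of `G`. -/
noncomputable def treebandwidth {V : Type*} (G : SimpleGraph V) : ℕ :=
  sInf {k | ∃ L : TreeLayout G, L.BandwidthLE k}

/-- Treedepth: the minimum depth (number of vertices on a root-to-leaf path) of a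
tree-layout (elimination tree) of `G`. -/
noncomputable def treedepth {V : Type*} (G : SimpleGraph V) : ℕ :=
  sInf {k | ∃ L : TreeLayout G, ∀ v : V, L.tree.dist L.root v + 1 ≤ k}

/-- A tree-partition of `G`: a partition of `V(G)` indexed by the nodes of a tree such that
every edge of `G` has both ends in one part or in parts indexed by adjacent nodes. -/
structure TreePartition {V : Type*} (G : SimpleGraph V) where
  ι : Type
  tree : SimpleGraph ι
  isTree : tree.IsTree
  part : V → ι
  adj : ∀ ⦃x y : V⦄, G.Adj x y → part x = part y ∨ tree.Adj (part x) (part y)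

/-- Tree-partition-width: minimum over tree-partitions of the maximum part size. -/
noncomputable def treePartitionWidth {V : Type*} (G : SimpleGraph V) : ℕ :=
  sInf {k | ∃ P : TreePartition G, ∀ i : P.ι, {v : V | P.part v = i}.ncard ≤ k}

/-- The connected component of `v` in the subgraph of `G` induced by `S`. -/
def connCompIn {V : Type*} (G : SimpleGraph V) (S : Set V) (v : V) : Set V :=
  {w : V | ∃ (hv : v ∈ S) (hw : w ∈ S), (G.induce S).Reachable ⟨v, hv⟩ ⟨w, hw⟩}

/-- `RootedTreedepthLE G U S n` expresses `td(G[S], U) ≤ n` for the rooted treedepth: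
it is `0` when `S` misses `U`, and otherwise one may delete one vertex from each
connected component and recurse. -/
inductive RootedTreedepthLE {V : Type*} (G : SimpleGraph V) (U : Set V) : Set V → ℕ → Prop
  | base (S : Set V) (n : ℕ) (h : S ∩ U = ∅) : RootedTreedepthLE G U S n
  | step (S : Set V) (n : ℕ) (pick : ∀ v : V, v ∈ S → V)
      (hpick : ∀ (v : V) (hv : v ∈ S), pick v hv ∈ connCompIn G S v)
      (h : ∀ (v : V) (hv : v ∈ S),
        RootedTreedepthLE G U (connCompIn G S v \ {pick v hv}) n) :
      RootedTreedepthLE G U S (n + 1)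

/-- A `U`-rooted minor model of the path on `k` vertices in `G`. -/
structure RootedPathMinor {V : Type*} (G : SimpleGraph V) (U : Set V) (k : ℕ) where
  branch : Fin k → Set V
  connected : ∀ i, (G.induce (branch i)).Connected
  disjoint : ∀ i j, i ≠ j → Disjoint (branch i) (branch j)
  rooted : ∀ i, (branch i ∩ U).Nonempty
  adj : ∀ i j : Fin k, (j : ℕ) = (i : ℕ) + 1 → ∃ a ∈ branch i, ∃ b ∈ branch j, G.Adj a b

/-- A subdivision of the `k`-fan in `G` with universal (center) vertex `v`:
branch vertices `b 0, …, b (k-1)` of the path, internally disjoint spokes from `v`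
and internally disjoint path segments between consecutive branch vertices. -/
structure FanSubdivision {V : Type*} (G : SimpleGraph V) (v : V) (k : ℕ) where
  b : Fin k → V
  binj : Function.Injective b
  bne : ∀ i, b i ≠ v
  spoke : ∀ i : Fin k, G.Walk v (b i)
  spokePath : ∀ i, (spoke i).IsPath
  seg : ∀ (i : Fin k) (h : (i : ℕ) + 1 < k), G.Walk (b i) (b ⟨(i : ℕ) + 1, h⟩)
  segPath : ∀ i h, (seg i h).IsPath
  vNotinSeg : ∀ i h, v ∉ (seg i h).support
  spokeDisj : ∀ i j, i ≠ j →
    {x | x ∈ (spoke i).support} ∩ {x | x ∈ (spoke j).support} = {v}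
  spokeSegDisj : ∀ i j h,
    {x | x ∈ (spoke i).support} ∩ {x | x ∈ (seg j h).support} ⊆
      ({b i} : Set V) ∩ {b j, b ⟨(j : ℕ) + 1, h⟩}
  segDisj : ∀ i j hi hj, i ≠ j →
    {x | x ∈ (seg i hi).support} ∩ {x | x ∈ (seg j hj).support} ⊆
      ({b i, b ⟨(i : ℕ) + 1, hi⟩} : Set V) ∩ {b j, b ⟨(j : ℕ) + 1, hj⟩}

/-- A `p`-centered colouring: every (nonempty) connected induced subgraph either receives
more than `p` colours or has a uniquely coloured vertex. -/
def IsPCenteredColoring {V : Type*} (G : SimpleGraph V) (p : ℕ) (c : V → ℕ) : Prop :=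
  ∀ S : Set V, S.Nonempty → (G.induce S).Connected →
    p < (c '' S).ncard ∨ ∃ x ∈ S, ∀ y ∈ S, c y = c x → y = x

/-- Treewidth, characterised via tree-layouts: the minimum over tree-layouts of the maximum
over nodes `u` of the number of strict ancestors of `u` that are `G`-neighbours of some
descendant of `u` (including `u`). -/
noncomputable def treewidthTL {V : Type*} (G : SimpleGraph V) : ℕ :=
  sInf {k | ∃ L : TreeLayout G, ∀ u : V,
    {a : V | L.StrictAnc a u ∧ ∃ d : V, L.Anc u d ∧ G.Adj a d}.ncard ≤ k}

/-- The pruned subtree of `x` in a tree-layout: descendants of `x` (including `x`) having a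
neighbour of `x` among their own descendants. -/
def prunedSubtree {V : Type*} {G : SimpleGraph V} (L : TreeLayout G) (x : V) : Set V :=
  {y : V | L.Anc x y ∧ ∃ d : V, L.Anc y d ∧ G.Adj x d}

/-- Treespan: the minimum over tree-layouts of (maximum size of a pruned subtree minus one). -/
noncomputable def treespan {V : Type*} (G : SimpleGraph V) : ℕ :=
  sInf {k | ∃ L : TreeLayout G, ∀ x : V, (prunedSubtree L x).ncard ≤ k + 1}

/-- A tree decomposition of `G`. -/
structure TreeDecomp {V : Type*} (G : SimpleGraph V) where
  ι : Type
  tree : SimpleGraph ι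
  isTree : tree.IsTree
  bag : ι → Set V
  coverV : ∀ v : V, ∃ t, v ∈ bag t
  coverE : ∀ ⦃x y : V⦄, G.Adj x y → ∃ t, x ∈ bag t ∧ y ∈ bag t
  subtree : ∀ v : V, (tree.induce {t : ι | v ∈ bag t}).Connected

/-- Domino treewidth: minimum width over tree decompositions in which every vertex
belongs to at most two bags. -/
noncomputable def dominoTreewidth {V : Type*} (G : SimpleGraph V) : ℕ :=
  sInf {k | ∃ D : TreeDecomp G, (∀ v : V, {t : D.ι | v ∈ D.bag t}.ncard ≤ 2) ∧
    ∀ t : D.ι, (D.bag t).ncard ≤ k + 1}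

/-- Edge-treewidth via tree-layouts: the minimum over tree-layouts of the maximum over nodes
`u` of the number of edges with one endpoint a descendant of `u` (including `u`) and the other
a strict ancestor of `u`. -/
noncomputable def edgeTreewidth {V : Type*} (G : SimpleGraph V) : ℕ :=
  sInf {k | ∃ L : TreeLayout G, ∀ u : V,
    {p : V × V | L.StrictAnc p.1 u ∧ L.Anc u p.2 ∧ G.Adj p.1 p.2}.ncard ≤ k}

/-- `S` is a block (2-connected component) of `G`: a maximal connected set of vertices whose
induced subgraph has no cutvertex. -/
def IsBlock {V : Type*} (G : SimpleGraph V) (S : Set V) : Prop :=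
  S.Nonempty ∧ (G.induce S).Connected ∧
    (∀ x ∈ S, (G.induce (S \ {x})).Preconnected) ∧
    ∀ S' : Set V, S ⊆ S' → (G.induce S').Connected →
      (∀ x ∈ S', (G.induce (S' \ {x})).Preconnected) → S' = S

/-- Biconnected maximum degree: the maximum over blocks of `G` of the maximum degree
inside the block. -/
noncomputable def biconnMaxDegree {V : Type*} (G : SimpleGraph V) : ℕ :=
  sSup {d | ∃ (S : Set V) (v : V), IsBlock G S ∧ v ∈ S ∧ d = {w ∈ S | G.Adj v w}.ncard}

/-- `G` is 3-connected: more than 3 vertices, and removing any two vertices leaves it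
connected. -/
def ThreeConnected {V : Type*} (G : SimpleGraph V) : Prop :=
  3 < Nat.card V ∧ ∀ x y : V, (G.induce {v : V | v ≠ x ∧ v ≠ y}).Connected

/-- `G` has `H` as a minor (branch-set model). -/
def HasMinor {V W : Type*} (G : SimpleGraph V) (H : SimpleGraph W) : Prop :=
  ∃ B : W → Set V, (∀ w, (G.induce (B w)).Connected) ∧
    (∀ w w', w ≠ w' → Disjoint (B w) (B w')) ∧
    ∀ ⦃w w'⦄, H.Adj w w' → ∃ a ∈ B w, ∃ b ∈ B w', G.Adj a b

/-- Planarity via Wagner's theorem: no `K₅` minor and no `K₃,₃` minor. -/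
def PlanarWagner {V : Type*} (G : SimpleGraph V) : Prop :=
  ¬ HasMinor G (completeGraph (Fin 5)) ∧
    ¬ HasMinor G (completeBipartiteGraph (Fin 3) (Fin 3))

/-- A subdivision of the `k`-wheel in `G` with hub `v`. -/
structure WheelSubdivision {V : Type*} (G : SimpleGraph V) (v : V) (k : ℕ) where
  b : Fin k → V
  binj : Function.Injective b
  bne : ∀ i, b i ≠ v
  spoke : ∀ i : Fin k, G.Walk v (b i)
  spokePath : ∀ i, (spoke i).IsPath
  seg : ∀ i : Fin k, G.Walk (b i) (b (finRotate k i))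
  segPath : ∀ i, (seg i).IsPath
  vNotinSeg : ∀ i, v ∉ (seg i).support
  spokeDisj : ∀ i j, i ≠ j →
    {x | x ∈ (spoke i).support} ∩ {x | x ∈ (spoke j).support} = {v}
  spokeSegDisj : ∀ i j,
    {x | x ∈ (spoke i).support} ∩ {x | x ∈ (seg j).support} ⊆
      ({b i} : Set V) ∩ {b j, b (finRotate k j)}
  segDisj : ∀ i j, i ≠ j →
    {x | x ∈ (seg i).support} ∩ {x | x ∈ (seg j).support} ⊆
      ({b i, b (finRotate k i)} : Set V) ∩ {b j, b (finRotate k j)}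

/-- A subdivision of the `k`-dipole with poles `u`, `v`: `k` internally vertex-disjoint
`u`–`v` paths of length at least `2`. -/
structure DipoleSubdivision {V : Type*} (G : SimpleGraph V) (u v : V) (k : ℕ) where
  path : Fin k → G.Walk u v
  isPath : ∀ i, (path i).IsPath
  len : ∀ i, 2 ≤ (path i).length
  disj : ∀ i j, i ≠ j →
    {x | x ∈ (path i).support} ∩ {x | x ∈ (path j).support} = ({u, v} : Set V)

/-- A separation of `G`. -/
def IsSeparation {V : Type*} (G : SimpleGraph V) (A B : Set V) : Prop :=
  A ∪ B = Set.univ ∧ ∀ a ∈ A \ B, ∀ b ∈ B \ A, ¬ G.Adj a b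

/-- `μ(X,Y)`: the minimum order of a separation `(A,B)` with `X ⊆ A` and `Y ⊆ B`. -/
noncomputable def muSep {V : Type*} (G : SimpleGraph V) (X Y : Set V) : ℕ :=
  sInf {n | ∃ A B : Set V, IsSeparation G A B ∧ X ⊆ A ∧ Y ⊆ B ∧ (A ∩ B).ncard = n}

def IsMaximalClique {V : Type*} (G : SimpleGraph V) (K : Set V) : Prop :=
  G.IsClique K ∧ ∀ K' : Set V, G.IsClique K' → K ⊆ K' → K' = K

/-- `G` is proper chordal: it has a tree-layout in which every maximal clique is an
interval of a root-to-leaf path. -/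
def ProperChordal {V : Type*} (G : SimpleGraph V) : Prop :=
  ∃ L : TreeLayout G, ∀ K : Set V, IsMaximalClique G K →
    ∃ a b : V, L.Anc a b ∧ K = L.interval a b

/-- A topological-minor model (subdivision embedding) of `H` in `G`. -/
structure TopMinorEmbedding {W V : Type*} (H : SimpleGraph W) (G : SimpleGraph V) where
  φ : W → V
  inj : Function.Injective φ
  path : ∀ ⦃a b : W⦄, H.Adj a b → G.Walk (φ a) (φ b)
  isPath : ∀ ⦃a b : W⦄ (h : H.Adj a b), (path h).IsPath
  branchOnPath : ∀ ⦃a b : W⦄ (h : H.Adj a b) (w : W),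
    φ w ∈ (path h).support → w = a ∨ w = b
  disj : ∀ ⦃a b c d : W⦄ (hab : H.Adj a b) (hcd : H.Adj c d), s(a, b) ≠ s(c, d) →
    {x | x ∈ (path hab).support} ∩ {x | x ∈ (path hcd).support} ⊆
      ({φ a, φ b} : Set V) ∩ {φ c, φ d}

/-- A subdivision of the star `K_{1,s}` in `H` with all leaves in `X`. -/
structure StarSubdivision {V : Type*} (H : SimpleGraph V) (X : Set V) (s : ℕ) where
  center : V
  leaf : Fin s → V
  leafInj : Function.Injective leaf
  leafX : ∀ i, leaf i ∈ X
  leafNe : ∀ i, leaf i ≠ center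
  path : ∀ i : Fin s, H.Walk center (leaf i)
  isPath : ∀ i, (path i).IsPath
  disj : ∀ i j, i ≠ j →
    {x | x ∈ (path i).support} ∩ {x | x ∈ (path j).support} = {center}

/-- The weight `w(t,U)` of a set `U` at a node `t` of a tree decomposition is at most `a`:
`|β(t) ∩ U|` plus the number of a suitable family of adhesions incident to `t` whose union
hits all paths from `β(t)` to `U ∖ β(t)` is at most `a`. -/
def WeightLE {V : Type*} {G : SimpleGraph V} (D : TreeDecomp G) (U : Set V) (t : D.ι)
    (a : ℕ) : Prop :=
  ∃ F : Set D.ι, (∀ s ∈ F, D.tree.Adj t s) ∧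
    (D.bag t ∩ U).ncard + F.ncard ≤ a ∧
    ∀ ⦃x y : V⦄ (p : G.Walk x y), x ∈ D.bag t → y ∈ U \ D.bag t →
      ∃ z ∈ p.support, ∃ s ∈ F, z ∈ D.bag t ∩ D.bag s

/-- The graph obtained from `G` by subdividing the edge `xy` into a path with `n + 1`
new internal vertices. -/
def subdivideEdge {V : Type*} (G : SimpleGraph V) (x y : V) (n : ℕ) :
    SimpleGraph (V ⊕ Fin (n + 1)) :=
  SimpleGraph.fromRel (fun a b =>
    (∃ u w : V, a = Sum.inl u ∧ b = Sum.inl w ∧ G.Adj u w ∧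
      ¬(u = x ∧ w = y) ∧ ¬(u = y ∧ w = x)) ∨
    (a = Sum.inl x ∧ b = Sum.inr 0) ∨
    (∃ i : Fin n, a = Sum.inr i.castSucc ∧ b = Sum.inr i.succ) ∨
    (a = Sum.inr (Fin.last n) ∧ b = Sum.inl y))

/-- Reachability is monotone under enlarging the induced set. -/
lemma reach_mono_aux {V : Type*} (G : SimpleGraph V) {T S : Set V} (hTS : T ⊆ S) {a b : V}
    (ha : a ∈ T) (hb : b ∈ T)
    (h : (G.induce T).Reachable ⟨a, ha⟩ ⟨b, hb⟩) :
    (G.induce S).Reachable ⟨a, hTS ha⟩ ⟨b, hTS hb⟩ := by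
  exact h.map ⟨Set.inclusion hTS, fun {x y} hxy => hxy⟩

/-- Restriction of a rooted path minor to a consecutive sub-interval of indices. -/
def RootedPathMinor.restrict {V : Type*} {G : SimpleGraph V} {U : Set V} {k : ℕ}
    (M : RootedPathMinor G U k) (o m : ℕ) (hom : o + m ≤ k) : RootedPathMinor G U m where
  branch i := M.branch ⟨o + i, by omega⟩
  connected i := M.connected _
  disjoint i j hij := M.disjoint _ _ (by
    intro he
    apply hij
    have : o + (i : ℕ) = o + (j : ℕ) := by
      have := congrArg (Fin.val) he; simpa using this
    exact Fin.ext (by omega))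
  rooted i := M.rooted _
  adj i j hj := M.adj _ _ (by simp [hj]; omega)

lemma rooted_path_minor_key {V : Type*} (G : SimpleGraph V) (U : Set V) :
    ∀ {S : Set V} {n : ℕ}, RootedTreedepthLE G U S n →
      ∀ M : RootedPathMinor G U (2 ^ n), ¬ (∀ i, M.branch i ⊆ S) := by
  intro S n h
  induction h with
  | base S n hSU =>
    intro M hsub
    obtain ⟨x, hxb, hxU⟩ := M.rooted ⟨0, Nat.two_pow_pos n⟩
    have : x ∈ S ∩ U := ⟨hsub _ hxb, hxU⟩
    rw [hSU] at this
    exact this.elim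
  | step S n pick hpick h ih =>
    intro M hsub
    -- pick a root vertex v in the first branch set
    obtain ⟨v, hv0, _⟩ := M.rooted ⟨0, Nat.two_pow_pos (n + 1)⟩
    have hvS : v ∈ S := hsub _ hv0
    -- everything reachable within a branch set
    have within : ∀ (i : Fin (2 ^ (n + 1))) (a b : V) (ha : a ∈ M.branch i)
        (hb : b ∈ M.branch i),
        (G.induce S).Reachable ⟨a, hsub i ha⟩ ⟨b, hsub i hb⟩ := by
      intro i a b ha hb
      exact reach_mono_aux G (hsub i) ha hb ((M.connected i).preconnected ⟨a, ha⟩ ⟨b, hb⟩)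
    -- all branch sets are in the component of v
    have reach : ∀ (i : ℕ) (hi : i < 2 ^ (n + 1)) (w : V) (hw : w ∈ M.branch ⟨i, hi⟩),
        (G.induce S).Reachable ⟨v, hvS⟩ ⟨w, hsub _ hw⟩ := by
      intro i
      induction i with
      | zero => intro hi w hw; exact within _ v w hv0 hw
      | succ i IH =>
        intro hi w hw
        have hi' : i < 2 ^ (n + 1) := by omega
        obtain ⟨a, ha, b, hb, hab⟩ := M.adj ⟨i, hi'⟩ ⟨i + 1, hi⟩ rfl
        refine ((IH hi' a ha).trans ?_).trans (within _ b w hb hw)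
        exact SimpleGraph.Adj.reachable (by exact hab)
    have hC : ∀ (i : Fin (2 ^ (n + 1))) (w : V), w ∈ M.branch i → w ∈ connCompIn G S v := by
      intro i w hw
      exact ⟨hvS, hsub i hw, reach i.1 i.2 w hw⟩
    set x := pick v hvS with hxdef
    have hpow : 2 ^ n + 2 ^ n ≤ 2 ^ (n + 1) := by rw [pow_succ]; omega
    by_cases hx : ∃ i : Fin (2 ^ (n + 1)), (i : ℕ) < 2 ^ n ∧ x ∈ M.branch i
    · -- x lives in the first half: take the second half
      obtain ⟨i0, hi0, hxi0⟩ := hx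
      refine ih v hvS (M.restrict (2 ^ n) (2 ^ n) hpow) ?_
      intro i w hw
      refine ⟨hC _ w hw, ?_⟩
      simp only [Set.mem_singleton_iff]
      intro hwx
      subst hwx
      have hne : i0 ≠ (⟨2 ^ n + (i : ℕ), by omega⟩ : Fin (2 ^ (n + 1))) := by
        intro he
        have := congrArg Fin.val he
        simp at this; omega
      exact (Set.disjoint_left.mp (M.disjoint _ _ hne) hxi0) hw
    · -- x not in the first half: take the first half
      push_neg at hx
      refine ih v hvS (M.restrict 0 (2 ^ n) (by rw [pow_succ]; omega)) ?_
      intro i w hw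
      refine ⟨hC _ w hw, ?_⟩
      simp only [Set.mem_singleton_iff]
      intro hwx
      subst hwx
      exact hx ⟨0 + (i : ℕ), by omega⟩ (by simpa using i.2) hw

/-- if `td(G,U) ≤ t` then there is no `U`-rooted path minor on `2^t` vertices. -/
theorem no_rooted_path_minor_of_rootedTreedepthLE {V : Type*} (G : SimpleGraph V)
    (U : Set V) (t : ℕ) (h : RootedTreedepthLE G U Set.univ t) :
    IsEmpty (RootedPathMinor G U (2 ^ t)) := by
  constructor
  intro M
  exact rooted_path_minor_key G U h M (fun i => Set.subset_univ _)
end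

section
/- A graph G contains a subdivision of the k-fan F_k whose universal (center) vertex is a given vertex v if and only if G−v contains an N(v)-rooted path minor on k vertices. -/
open SimpleGraph

/-!
A subdivided fan centred at `v` yields the path model whose `i`-th branch set is the `i`-th
spoke without `v` together with the `i`-th segment without its last vertex: it contains the
neighbour of `v` on the spoke, and the last edge of the segment joins it to the next branch set.

Conversely, in each branch set `C i` of an `N(v)`-rooted model pick a neighbour `x i` of `v`, an
entry `e i` and an exit `f i` at the edges to the previous and next branch sets. A path from
`e i` to `f i` inside `C i`, together with a path from `x i` to its first vertex on it, is a
tripod in `C i`; its centre is the branch vertex `b i`. The leg to `x i` extended by `v` is the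
`i`-th spoke, and the exit leg of `C i`, the edge `f i e (i+1)` and the entry leg of `C (i+1)`
form the `i`-th segment.
-/

open Function

section

variable {V : Type*} {G : SimpleGraph V}

theorem Pairwise.eq_of_mem_of_mem {ι α : Type*} {C : ι → Set α}
    (hC : Pairwise (Disjoint on C)) {i j : ι} {a : α} (hi : a ∈ C i) (hj : a ∈ C j) : i = j :=
  of_not_not fun hij => Set.disjoint_left.1 (hC hij) hi hj

namespace SimpleGraph

noncomputable def induceInduceIso (S : Set V) (B : Set S) :
    (G.induce S).induce B ≃g G.induce (Subtype.val '' B) where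
  toEquiv := Equiv.Set.image Subtype.val B Subtype.val_injective
  map_rel_iff' := Iff.rfl

theorem exists_isPath_of_preconnected_induce {C : Set V} (hC : (G.induce C).Preconnected)
    {a b : V} (ha : a ∈ C) (hb : b ∈ C) :
    ∃ p : G.Walk a b, p.IsPath ∧ ∀ z ∈ p.support, z ∈ C := by
  classical
  obtain ⟨q⟩ := hC ⟨a, ha⟩ ⟨b, hb⟩
  refine ⟨(q.map (Embedding.induce C).toHom).bypass, Walk.bypass_isPath _, fun z hz => ?_⟩
  have hz : z ∈ (q.map (Embedding.induce C).toHom).support :=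
    Walk.support_bypass_subset_support _ hz
  simp only [Walk.support_map, List.mem_map] at hz
  obtain ⟨z, -, rfl⟩ := hz
  exact z.2

namespace Walk

theorem exists_walk_to_first_mem (s : Set V) {x e : V} (Q : G.Walk x e) (he : e ∈ s) :
    ∃ y ∈ s, ∃ P : G.Walk x y,
      (∀ z ∈ P.support, z ∈ Q.support) ∧ ∀ z ∈ P.support, z ∈ s → z = y := by
  induction Q with
  | nil => exact ⟨_, he, nil, by simp, by simp⟩
  | @cons x x' e h Q ih =>
    by_cases hx : x ∈ s
    · exact ⟨x, hx, nil, by simp, by simp⟩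
    obtain ⟨y, hy, P, hPQ, hPs⟩ := ih he
    refine ⟨y, hy, cons h P, ?_, ?_⟩
    · simp only [support_cons, List.mem_cons, forall_eq_or_imp, true_or, true_and]
      exact fun z hz => Or.inr (hPQ z hz)
    · simp only [support_cons, List.mem_cons, forall_eq_or_imp]
      exact ⟨fun h => absurd h hx, hPs⟩

theorem IsPath.eq_of_mem_support_append {u v w x : V} {p : G.Walk u v} {q : G.Walk v w}
    (h : (p.append q).IsPath) (hp : x ∈ p.support) (hq : x ∈ q.support) : x = v := by
  rw [isPath_def, support_append, List.nodup_append] at h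
  rw [← cons_tail_support, List.mem_cons] at hq
  exact hq.resolve_right fun hq => h.2.2 x hp x hq rfl

theorem IsPath.append_cons {u a b w : V} {p : G.Walk u a} {q : G.Walk b w} (h : G.Adj a b)
    (hp : p.IsPath) (hq : q.IsPath) (hpq : ∀ z ∈ p.support, z ∉ q.support) :
    (p.append (cons h q)).IsPath := by
  rw [isPath_def, support_append, support_cons, List.tail_cons, List.nodup_append]
  exact ⟨hp.support_nodup, hq.support_nodup, fun z hz _ hz' hzz' => hpq z hz (hzz' ▸ hz')⟩

theorem IsPath.preconnected_induce_support_diff_start {u w : V} {p : G.Walk u w}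
    (hp : p.IsPath) : (G.induce {x | x ∈ p.support ∧ x ≠ u}).Preconnected := by
  cases p with
  | nil => rintro ⟨x, hx, hxu⟩; simp_all
  | cons h q =>
    have hu := ((cons_isPath_iff _ _).1 hp).2
    have hset : {x | x ∈ (cons h q).support ∧ x ≠ u} = {x | x ∈ q.support} := by
      ext x
      simp only [support_cons, List.mem_cons, Set.mem_ofPred_eq]
      exact ⟨fun ⟨hx, hxu⟩ => hx.resolve_left hxu,
        fun hx => ⟨Or.inr hx, by rintro rfl; exact hu hx⟩⟩
    rw [hset]
    exact q.connected_induce_support.preconnected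

theorem IsPath.preconnected_induce_support_diff_end {u w : V} {p : G.Walk u w}
    (hp : p.IsPath) : (G.induce {x | x ∈ p.support ∧ x ≠ w}).Preconnected := by
  have hset : {x | x ∈ p.support ∧ x ≠ w} = {x | x ∈ p.reverse.support ∧ x ≠ w} := by
    simp [support_reverse]
  rw [hset]
  exact hp.reverse.preconnected_induce_support_diff_start

end Walk

end SimpleGraph

theorem Fin.ne_mk_succ {k : ℕ} (i : Fin k) (h : (i : ℕ) + 1 < k) : i ≠ ⟨i + 1, h⟩ :=
  Fin.ne_of_lt (Nat.lt_succ_self _)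

open Walk

theorem RootedPathMinor.nonempty_induce_iff {S U : Set V} {k : ℕ} :
    Nonempty (RootedPathMinor (G.induce S) (Subtype.val ⁻¹' U) k) ↔
      ∃ M : RootedPathMinor G U k, ∀ i, M.branch i ⊆ S := by
  constructor
  · rintro ⟨M⟩
    refine ⟨
      { branch := fun i => Subtype.val '' M.branch i
        connected := fun i => (induceInduceIso S _).connected_iff.1 (M.connected i)
        disjoint := fun i j hij =>
          (Set.disjoint_image_iff Subtype.val_injective).2 (M.disjoint i j hij)
        rooted := fun i => Set.image_inter_preimage Subtype.val _ U ▸ (M.rooted i).image _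
        adj := fun i j hij => ?_ }, fun i => Subtype.coe_image_subset _ _⟩
    obtain ⟨a, ha, b, hb, hab⟩ := M.adj i j hij
    exact ⟨a, Set.mem_image_of_mem _ ha, b, Set.mem_image_of_mem _ hb, hab⟩
  · rintro ⟨M, hM⟩
    refine ⟨
      { branch := fun i => Subtype.val ⁻¹' M.branch i
        connected := fun i => (induceInduceIso S _).connected_iff.2 ?_
        disjoint := fun i j hij => (M.disjoint i j hij).preimage _
        rooted := fun i => ?_
        adj := fun i j hij => ?_ }⟩
    · rw [Subtype.image_preimage_coe, Set.inter_eq_right.2 (hM i)]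
      exact M.connected i
    · obtain ⟨w, hwB, hwU⟩ := M.rooted i
      exact ⟨⟨w, hM i hwB⟩, hwB, hwU⟩
    · obtain ⟨a, ha, b, hb, hab⟩ := M.adj i j hij
      exact ⟨⟨a, hM i ha⟩, ha, ⟨b, hM j hb⟩, hb, hab⟩

namespace FanSubdivision

variable {v : V} {k : ℕ} (F : FanSubdivision G v k)

def spokeTail (i : Fin k) : Set V := {x | x ∈ (F.spoke i).support ∧ x ≠ v}

def segInit (i : Fin k) : Set V :=
  {x | ∃ h : (i : ℕ) + 1 < k, x ∈ (F.seg i h).support ∧ x ≠ F.b ⟨i + 1, h⟩}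

def branch (i : Fin k) : Set V := F.spokeTail i ∪ F.segInit i

theorem b_ne_b_succ (i : Fin k) (h : (i : ℕ) + 1 < k) : F.b i ≠ F.b ⟨i + 1, h⟩ :=
  F.binj.ne (Fin.ne_mk_succ i h)

theorem b_mem_spokeTail (i : Fin k) : F.b i ∈ F.spokeTail i := ⟨end_mem_support _, F.bne i⟩

theorem connected_branch (i : Fin k) : (G.induce (F.branch i)).Connected := by
  refine induce_connected_of_patches (F.b i) (Or.inl (F.b_mem_spokeTail i)) fun {w} hw => ?_
  rcases hw with hw | ⟨h, hw⟩
  · exact ⟨_, Set.subset_union_left, F.b_mem_spokeTail i, hw,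
      (F.spokePath i).preconnected_induce_support_diff_start _ _⟩
  · exact ⟨{x | x ∈ (F.seg i h).support ∧ x ≠ F.b ⟨i + 1, h⟩},
      fun x hx => Or.inr ⟨h, hx⟩,
      ⟨start_mem_support _, F.b_ne_b_succ i h⟩, hw,
      (F.segPath i h).preconnected_induce_support_diff_end _ _⟩

theorem disjoint_spokeTail {i j : Fin k} (hij : i ≠ j) :
    Disjoint (F.spokeTail i) (F.spokeTail j) :=
  Set.disjoint_left.2 fun x hi hj =>
    hi.2 (F.spokeDisj i j hij ▸ ⟨hi.1, hj.1⟩ : x ∈ ({v} : Set V))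

theorem disjoint_spokeTail_segInit {i j : Fin k} (hij : i ≠ j) :
    Disjoint (F.spokeTail i) (F.segInit j) := by
  refine Set.disjoint_left.2 fun x ⟨hxi, _⟩ ⟨h, hxj, hxb⟩ => ?_
  obtain ⟨rfl, hx | hx⟩ := F.spokeSegDisj i j h ⟨hxi, hxj⟩
  · exact hij (F.binj hx)
  · exact hxb hx

theorem disjoint_segInit {i j : Fin k} (hij : i ≠ j) : Disjoint (F.segInit i) (F.segInit j) := by
  refine Set.disjoint_left.2 fun x ⟨hi, hxi, hxbi⟩ ⟨hj, hxj, hxbj⟩ => ?_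
  obtain ⟨hx | hx, hx' | hx'⟩ := F.segDisj i j hi hj hij ⟨hxi, hxj⟩
  · exact hij (F.binj (hx.symm.trans hx'))
  · exact hxbj hx'
  · exact hxbi hx
  · exact hxbi hx

theorem disjoint_branch {i j : Fin k} (hij : i ≠ j) : Disjoint (F.branch i) (F.branch j) :=
  Set.disjoint_union_left.2
    ⟨Set.disjoint_union_right.2 ⟨F.disjoint_spokeTail hij, F.disjoint_spokeTail_segInit hij⟩,
      Set.disjoint_union_right.2
        ⟨(F.disjoint_spokeTail_segInit hij.symm).symm, F.disjoint_segInit hij⟩⟩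

theorem branch_subset (i : Fin k) : F.branch i ⊆ {w | w ≠ v} := by
  rintro x (⟨-, hx⟩ | ⟨h, hx, -⟩)
  · exact hx
  · rintro rfl
    exact F.vNotinSeg i h hx

def rootedPathMinor : RootedPathMinor G (G.neighborSet v) k where
  branch := F.branch
  connected := F.connected_branch
  disjoint _ _ := F.disjoint_branch
  rooted i :=
    have hnil : ¬(F.spoke i).Nil := not_nil_of_ne (F.bne i).symm
    ⟨(F.spoke i).snd, Or.inl ⟨List.mem_of_mem_tail (snd_mem_tail_support hnil),
      (adj_snd hnil).ne'⟩, adj_snd hnil⟩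
  adj i j hj := by
    have h : (i : ℕ) + 1 < k := hj ▸ j.isLt
    obtain rfl : j = ⟨i + 1, h⟩ := Fin.ext hj
    have hnil : ¬(F.seg i h).Nil := not_nil_of_ne (F.b_ne_b_succ i h)
    exact ⟨(F.seg i h).penultimate,
      Or.inr ⟨h, List.mem_of_mem_dropLast (penultimate_mem_dropLast_support hnil),
        (adj_penultimate hnil).ne⟩,
      F.b ⟨i + 1, h⟩, Or.inl (F.b_mem_spokeTail _), adj_penultimate hnil⟩

end FanSubdivision

structure Tripod (G : SimpleGraph V) (C : Set V) (x e f : V) where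
  center : V
  toRoot : G.Walk center x
  fromEntry : G.Walk e center
  toExit : G.Walk center f
  isPath_toRoot : toRoot.IsPath
  isPath_fromEntry : fromEntry.IsPath
  isPath_toExit : toExit.IsPath
  toRoot_subset : ∀ z ∈ toRoot.support, z ∈ C
  fromEntry_subset : ∀ z ∈ fromEntry.support, z ∈ C
  toExit_subset : ∀ z ∈ toExit.support, z ∈ C
  toRoot_meet_fromEntry : ∀ z ∈ toRoot.support, z ∈ fromEntry.support → z = center
  toRoot_meet_toExit : ∀ z ∈ toRoot.support, z ∈ toExit.support → z = center
  fromEntry_meet_toExit : ∀ z ∈ fromEntry.support, z ∈ toExit.support → z = center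

theorem nonempty_tripod {C : Set V} (hC : (G.induce C).Preconnected) {x e f : V}
    (hx : x ∈ C) (he : e ∈ C) (hf : f ∈ C) : Nonempty (Tripod G C x e f) := by
  classical
  obtain ⟨R, hR, hRC⟩ := exists_isPath_of_preconnected_induce hC he hf
  obtain ⟨Q, -, hQC⟩ := exists_isPath_of_preconnected_induce hC hx he
  obtain ⟨y, hy, P, hPQ, hPR⟩ :=
    Q.exists_walk_to_first_mem {z | z ∈ R.support} (start_mem_support R)
  obtain ⟨q, r, hq, hr, rfl⟩ := hR.mem_support_iff_exists_append.1 hy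
  have hP : ∀ z ∈ P.bypass.reverse.support, z ∈ P.support := fun z hz =>
    support_bypass_subset_support _ (by simpa [support_reverse] using hz)
  exact ⟨⟨y, P.bypass.reverse, q, r, (bypass_isPath _).reverse, hq, hr,
    fun z hz => hQC z (hPQ z (hP z hz)),
    fun z hz => hRC z ((mem_support_append_iff _ _).2 (Or.inl hz)),
    fun z hz => hRC z ((mem_support_append_iff _ _).2 (Or.inr hz)),
    fun z hz hz' => hPR z (hP z hz) ((mem_support_append_iff _ _).2 (Or.inl hz')),
    fun z hz hz' => hPR z (hP z hz) ((mem_support_append_iff _ _).2 (Or.inr hz')),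
    fun _ hz hz' => hR.eq_of_mem_support_append hz hz'⟩⟩

namespace Tripod

variable {C C' : Set V} {x e f x' e' f' v z : V} (T : Tripod G C x e f)

theorem center_mem : T.center ∈ C := T.toExit_subset _ (start_mem_support _)

def spoke (hx : G.Adj v x) : G.Walk v T.center := cons hx T.toRoot.reverse

theorem mem_support_spoke (hx : G.Adj v x) :
    z ∈ (T.spoke hx).support ↔ z = v ∨ z ∈ T.toRoot.support := by
  simp [spoke, support_reverse]

def link (T' : Tripod G C' x' e' f') (h : G.Adj f e') : G.Walk T.center T'.center :=
  T.toExit.append (cons h T'.fromEntry)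

theorem mem_support_link (T' : Tripod G C' x' e' f') (h : G.Adj f e') :
    z ∈ (T.link T' h).support ↔ z ∈ T.toExit.support ∨ z ∈ T'.fromEntry.support := by
  simp [link, support_append]

end Tripod

namespace FanSubdivision

variable {v : V} {k : ℕ} {C : Fin k → Set V} {x e f : Fin k → V}

def ofTripods (hC : Pairwise (Disjoint on C)) (hv : ∀ i, v ∉ C i) (hx : ∀ i, G.Adj v (x i))
    (hfe : ∀ (i : Fin k) (h : (i : ℕ) + 1 < k), G.Adj (f i) (e ⟨i + 1, h⟩))
    (T : ∀ i, Tripod G (C i) (x i) (e i) (f i)) : FanSubdivision G v k where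
  b i := (T i).center
  binj i j (h : (T i).center = (T j).center) :=
    hC.eq_of_mem_of_mem (T i).center_mem (h ▸ (T j).center_mem)
  bne i h := hv i (h ▸ (T i).center_mem)
  spoke i := (T i).spoke (hx i)
  spokePath i := (cons_isPath_iff _ _).2 ⟨(T i).isPath_toRoot.reverse,
    fun h => hv i ((T i).toRoot_subset v (by simpa [support_reverse] using h))⟩
  seg i h := (T i).link (T ⟨i + 1, h⟩) (hfe i h)
  segPath i h := (T i).isPath_toExit.append_cons _ (T _).isPath_fromEntry fun z hz hz' =>
    Fin.ne_mk_succ i h <|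
      hC.eq_of_mem_of_mem ((T i).toExit_subset z hz) ((T _).fromEntry_subset z hz')
  vNotinSeg i h hvs := by
    rcases ((T i).mem_support_link _ _).1 hvs with hvs | hvs
    · exact hv _ ((T i).toExit_subset v hvs)
    · exact hv _ ((T _).fromEntry_subset v hvs)
  spokeDisj i j hij := by
    ext z
    simp only [Set.mem_inter_iff, Set.mem_ofPred_eq, Tripod.mem_support_spoke,
      Set.mem_singleton_iff]
    refine ⟨fun ⟨hi, hj⟩ => ?_, by rintro rfl; simp⟩
    by_contra hz
    exact hij (hC.eq_of_mem_of_mem ((T i).toRoot_subset z (hi.resolve_left hz))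
      ((T j).toRoot_subset z (hj.resolve_left hz)))
  spokeSegDisj i j h := by
    rintro z ⟨hzi, hzj⟩
    rw [Set.mem_ofPred_eq, Tripod.mem_support_spoke] at hzi
    rw [Set.mem_ofPred_eq, Tripod.mem_support_link] at hzj
    rcases hzj with hz | hz
    · have hzC := (T j).toExit_subset z hz
      have hzr := hzi.resolve_left fun hzv => hv j (hzv ▸ hzC)
      obtain rfl := hC.eq_of_mem_of_mem ((T i).toRoot_subset z hzr) hzC
      have hzb := (T i).toRoot_meet_toExit z hzr hz
      exact ⟨hzb, Or.inl hzb⟩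
    · have hzC := (T _).fromEntry_subset z hz
      have hzr := hzi.resolve_left fun hzv => hv _ (hzv ▸ hzC)
      obtain rfl := hC.eq_of_mem_of_mem ((T i).toRoot_subset z hzr) hzC
      have hzb := (T _).toRoot_meet_fromEntry z hzr hz
      exact ⟨hzb, Or.inr hzb⟩
  segDisj i j hi hj hij := by
    rintro z ⟨hzi, hzj⟩
    rw [Set.mem_ofPred_eq, Tripod.mem_support_link] at hzi hzj
    rcases hzi with hzi | hzi <;> rcases hzj with hzj | hzj
    · exact absurd (hC.eq_of_mem_of_mem ((T i).toExit_subset z hzi)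
        ((T j).toExit_subset z hzj)) hij
    · obtain rfl := hC.eq_of_mem_of_mem ((T i).toExit_subset z hzi) ((T _).fromEntry_subset z hzj)
      have hzb := (T _).fromEntry_meet_toExit z hzj hzi
      exact ⟨Or.inl hzb, Or.inr hzb⟩
    · obtain rfl := hC.eq_of_mem_of_mem ((T _).fromEntry_subset z hzi) ((T j).toExit_subset z hzj)
      have hzb := (T _).fromEntry_meet_toExit z hzi hzj
      exact ⟨Or.inr hzb, Or.inl hzb⟩
    · have hsucc :=
        hC.eq_of_mem_of_mem ((T _).fromEntry_subset z hzi) ((T _).fromEntry_subset z hzj)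
      exact absurd (Fin.ext (by simpa using congrArg Fin.val hsucc)) hij

end FanSubdivision

namespace RootedPathMinor

variable {U : Set V} {k : ℕ}

theorem exists_entry_exit (M : RootedPathMinor G U k) :
    ∃ e f : Fin k → V, (∀ i, e i ∈ M.branch i) ∧ (∀ i, f i ∈ M.branch i) ∧
      ∀ (i : Fin k) (h : (i : ℕ) + 1 < k), G.Adj (f i) (e ⟨i + 1, h⟩) := by
  have hne : ∀ i, (M.branch i).Nonempty := fun i => (M.rooted i).mono Set.inter_subset_left
  have entry : ∀ j : Fin k, ∃ b ∈ M.branch j,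
      ∀ i : Fin k, (j : ℕ) = i + 1 → ∃ a ∈ M.branch i, G.Adj a b := by
    intro j
    rcases Nat.eq_zero_or_pos j with hj | hj
    · obtain ⟨b, hb⟩ := hne j
      exact ⟨b, hb, fun i hi => by omega⟩
    · obtain ⟨a, ha, b, hb, hab⟩ := M.adj ⟨j - 1, by omega⟩ j (by simp only; omega)
      refine ⟨b, hb, fun i hi => ?_⟩
      rw [show i = ⟨j - 1, by omega⟩ from Fin.ext (by simp only; omega)]
      exact ⟨a, ha, hab⟩
  choose e he hfe using entry
  have exit : ∀ i : Fin k, ∃ a ∈ M.branch i,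
      ∀ h : (i : ℕ) + 1 < k, G.Adj a (e ⟨i + 1, h⟩) := by
    intro i
    by_cases h : (i : ℕ) + 1 < k
    · obtain ⟨a, ha, hadj⟩ := hfe ⟨i + 1, h⟩ i rfl
      exact ⟨a, ha, fun _ => hadj⟩
    · obtain ⟨a, ha⟩ := hne i
      exact ⟨a, ha, fun h' => absurd h' h⟩
  choose f hf hadj using exit
  exact ⟨e, f, he, hf, hadj⟩

theorem nonempty_fanSubdivision {v : V} (M : RootedPathMinor G (G.neighborSet v) k)
    (hv : ∀ i, v ∉ M.branch i) : Nonempty (FanSubdivision G v k) := by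
  choose x hx using M.rooted
  obtain ⟨e, f, he, hf, hfe⟩ := M.exists_entry_exit
  exact ⟨.ofTripods (C := M.branch) M.disjoint hv (fun i => (hx i).2) hfe fun i =>
    (nonempty_tripod (M.connected i).preconnected (hx i).1 (he i) (hf i)).some⟩

end RootedPathMinor

end

/-- `G` has a subdivided `k`-fan centered at `v` iff `G - v` has an
`N(v)`-rooted path minor on `k` vertices. -/
theorem fanSubdivision_iff_rootedPathMinor {V : Type*} (G : SimpleGraph V) (v : V) (k : ℕ) :
    Nonempty (FanSubdivision G v k) ↔
      Nonempty (RootedPathMinor (G.induce {w : V | w ≠ v})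
        {w : ↥{w : V | w ≠ v} | G.Adj v (w : V)} k) := by
  refine Iff.trans ?_ (RootedPathMinor.nonempty_induce_iff (U := G.neighborSet v)).symm
  constructor
  · rintro ⟨F⟩
    exact ⟨F.rootedPathMinor, F.branch_subset⟩
  · rintro ⟨M, hM⟩
    exact M.nonempty_fanSubdivision fun i hv => hM i hv rfl
end

section
/- If a graph G has treebandwidth at most k, then for every positive integer p, G admits a p-centered colouring using at most pk+1 colours. -/
open SimpleGraph

/-! Colour each vertex by its depth modulo `p * k + 1` in a tree-layout of bandwidth `k`. A
connected set `S` lies below its shallowest vertex `x`, because every edge joins comparable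
vertices; so any other vertex of `S` coloured like `x` is at least `p * k + 1` levels deeper. An
edge changes the depth by at most `k`, so a walk in `S` down to that vertex meets each of the `p`
consecutive windows of `k` depths below `x`, and these `p` depths together with that of `x` are
distinct modulo `p * k + 1`. -/

namespace SimpleGraph

variable {V W : Type*}

theorem Hom.dist_le_of_reachable {G : SimpleGraph V} {G' : SimpleGraph W} (f : G →g G')
    {u v : V} (h : G.Reachable u v) : G'.dist (f u) (f v) ≤ G.dist u v := by
  obtain ⟨w, hw⟩ := h.exists_walk_length_eq_dist
  calc G'.dist (f u) (f v) ≤ (w.map f).length := dist_le _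
    _ = G.dist u v := by rw [Walk.length_map, hw]

theorem Iso.dist_eq {G : SimpleGraph V} {G' : SimpleGraph W} (f : G ≃g G') (u v : V) :
    G'.dist (f u) (f v) = G.dist u v := by
  by_cases h : G.Reachable u v
  · refine le_antisymm (f.toHom.dist_le_of_reachable h) ?_
    have h' : G'.Reachable (f u) (f v) := Iso.reachable_iff.mpr h
    simpa using f.symm.toHom.dist_le_of_reachable h'
  · rw [dist_eq_zero_of_not_reachable h,
      dist_eq_zero_of_not_reachable (mt Iso.reachable_iff.mp h)]

theorem Walk.dist_add_dist_of_mem_support [DecidableEq V] {G : SimpleGraph V} {u v z : V}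
    (p : G.Walk u v) (hp : p.length = G.dist u v) (hz : z ∈ p.support) :
    G.dist u z + G.dist z v = G.dist u v := by
  rw [← length_eq_dist_of_subwalk hp (p.isSubwalk_takeUntil hz),
    ← length_eq_dist_of_subwalk hp (p.isSubwalk_dropUntil hz), ← Walk.length_append,
    p.take_spec hz, hp]

theorem pathGraph_dist_of_le {n : ℕ} {i j : Fin n} (h : i ≤ j) :
    (pathGraph n).dist i j = j - i := by
  have hconn : (pathGraph n).Connected := (connected_iff _).mpr ⟨pathGraph_preconnected n, ⟨i⟩⟩
  have length_ge : ∀ {a b : Fin n} (w : (pathGraph n).Walk a b), (b : ℕ) - a ≤ w.length := by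
    intro a b w
    induction w with
    | nil => simp
    | cons hadj _ ih => rw [pathGraph_adj] at hadj; rw [Walk.length_cons]; omega
  have dist_le_of_add : ∀ (d : ℕ) (a b : Fin n), (a : ℕ) + d = b →
      (pathGraph n).dist a b ≤ d := by
    intro d
    induction d with
    | zero => intro a b hab; rw [Fin.ext (by omega : a.val = b.val), dist_self]
    | succ d ih =>
      intro a b hab
      let a' : Fin n := ⟨a + 1, by omega⟩
      have hadj : (pathGraph n).Adj a a' := pathGraph_adj.mpr (Or.inl rfl)
      have := hconn.dist_triangle (u := a) (v := a') (w := b)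
      have := ih a' b (by simp only [a']; omega)
      rw [dist_eq_one_iff_adj.mpr hadj] at *
      omega
  obtain ⟨w, hw⟩ := hconn.exists_walk_length_eq_dist i j
  exact le_antisymm (dist_le_of_add _ i j (by omega)) (hw ▸ length_ge w)

theorem pathGraph_isAcyclic (n : ℕ) : (pathGraph n).IsAcyclic := by
  rw [isAcyclic_iff_forall_adj_isBridge]
  intro i j hij
  wlog h : (i : ℕ) + 1 = j generalizing i j
  · rw [Sym2.eq_swap]; exact this hij.symm ((pathGraph_adj.mp hij).resolve_left h)
  rw [isBridge_iff]
  rintro ⟨w⟩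
  obtain ⟨d, -, hd, hd'⟩ := w.exists_boundary_dart {a | a ≤ i} (le_refl i) (by simp; omega)
  obtain ⟨hadj, hne⟩ := deleteEdges_adj.mp d.adj
  simp only [Set.mem_ofPred_eq, not_le, Fin.le_def] at hd hd'
  rw [pathGraph_adj] at hadj
  have h1 : d.fst = i := Fin.ext (by omega)
  have h2 : d.snd = j := Fin.ext (by omega)
  exact hne (by rw [h1, h2]; rfl)

theorem pathGraph_isTree (n : ℕ) : (pathGraph (n + 1)).IsTree :=
  ⟨pathGraph_connected n, pathGraph_isAcyclic _⟩

theorem Walk.exists_mem_support_Ico {H : SimpleGraph W} {f : W → ℕ}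
    {k : ℕ} (hf : ∀ u v, H.Adj u v → f v ≤ f u + k) {a b : W} (p : H.Walk a b) {s : ℕ}
    (ha : f a < s) (hb : s ≤ f b) : ∃ z ∈ p.support, s ≤ f z ∧ f z < s + k := by
  obtain ⟨d, hd, hfst, hsnd⟩ := p.exists_boundary_dart {z | f z < s} ha (not_lt.mpr hb)
  have := hf _ _ d.adj
  simp only [Set.mem_ofPred_eq, not_lt] at hfst hsnd
  exact ⟨d.snd, p.dart_snd_mem_support_of_mem_darts hd, hsnd, by omega⟩

end SimpleGraph

theorem Nat.le_ncard_image_mod {R : Set ℕ} (hR : R.Finite) {a k p : ℕ} (ha : a ∈ R)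
    (hgap : ∀ j < p, ∃ r ∈ R, a + j * k < r ∧ r ≤ a + j * k + k) :
    p + 1 ≤ ((· % (p * k + 1)) '' R).ncard := by
  have hcount : ∀ j ≤ p, j + 1 ≤ (R ∩ Set.Icc a (a + j * k)).ncard := by
    intro j
    induction j with
    | zero =>
      intro _
      rw [zero_mul, add_zero, Set.Icc_self, Set.inter_singleton_of_mem ha, Set.ncard_singleton]
    | succ j ih =>
      intro hj
      obtain ⟨r, hr, hr₁, hr₂⟩ := hgap j hj
      have hsub : R ∩ Set.Icc a (a + j * k) ⊂ R ∩ Set.Icc a (a + (j + 1) * k) := by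
        refine (Set.ssubset_iff_of_subset ?_).mpr ⟨r, ⟨hr, ?_, ?_⟩, fun h => ?_⟩
        · exact Set.inter_subset_inter_right _ (Set.Icc_subset_Icc_right (by nlinarith))
        · omega
        · nlinarith
        · have := h.2.2; omega
      exact (ih (by omega)).trans_lt (Set.ncard_lt_ncard hsub (hR.inter_of_left _))
  have hinj : Set.InjOn (· % (p * k + 1)) (Set.Icc a (a + p * k)) :=
    (Nat.mod_injOn_Ico a _).mono fun x hx => by
      simp only [Set.mem_Icc, Finset.coe_Ico, Set.mem_Ico] at hx ⊢; omega
  calc p + 1 ≤ (R ∩ Set.Icc a (a + p * k)).ncard := hcount p le_rfl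
    _ = ((· % (p * k + 1)) '' (R ∩ Set.Icc a (a + p * k))).ncard :=
      ((hinj.mono Set.inter_subset_right).ncard_image).symm
    _ ≤ ((· % (p * k + 1)) '' R).ncard :=
      Set.ncard_le_ncard (Set.image_mono Set.inter_subset_left) (hR.image _)

theorem ncard_range_mod_le {V : Type*} (f : V → ℕ) {m : ℕ} (hm : 0 < m) :
    (Set.range fun v => f v % m).ncard ≤ m :=
  (Set.ncard_le_ncard (Set.range_subset_iff.mpr fun v => (Nat.mod_lt (f v) hm : _ ∈ Set.Iio m))
    (Set.finite_Iio m)).trans_eq (Set.ncard_Iio_nat m)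

section AncIn

variable {V : Type*} {T : SimpleGraph V} {r x y z : V}

theorem ancIn_refl (T : SimpleGraph V) (r x : V) : AncIn T r x x := by
  simp [AncIn]

theorem AncIn.trans (hT : T.Connected) (hxy : AncIn T r x y) (hyz : AncIn T r y z) :
    AncIn T r x z := by
  unfold AncIn at *
  have := hT.dist_triangle (u := x) (v := y) (w := z)
  have := hT.dist_triangle (u := r) (v := x) (w := z)
  omega

theorem AncIn.eq_of_dist_le (hT : T.Connected) (h : AncIn T r x y)
    (hd : T.dist r y ≤ T.dist r x) : x = y :=
  hT.dist_eq_zero_iff.mp (by unfold AncIn at h; omega)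

theorem SimpleGraph.IsTree.ancIn_total (hT : T.IsTree) (hx : AncIn T r x z)
    (hy : AncIn T r y z) : AncIn T r x y ∨ AncIn T r y x := by
  classical
  obtain ⟨p₁, -, hp₁⟩ := hT.connected.exists_path_of_dist r x
  obtain ⟨p₂, -, hp₂⟩ := hT.connected.exists_path_of_dist x z
  obtain ⟨q₁, -, hq₁⟩ := hT.connected.exists_path_of_dist r y
  obtain ⟨q₂, -, hq₂⟩ := hT.connected.exists_path_of_dist y z
  have hp : (p₁.append p₂).length = T.dist r z := by rw [Walk.length_append]; exact hp₁ ▸ hp₂ ▸ hx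
  have hq : (q₁.append q₂).length = T.dist r z := by rw [Walk.length_append]; exact hq₁ ▸ hq₂ ▸ hy
  have hpq : p₁.append p₂ = q₁.append q₂ :=
    congrArg Subtype.val <| (hT.isAcyclic.subsingleton_path r z).elim
      ⟨_, Walk.isPath_of_length_eq_dist _ hp⟩ ⟨_, Walk.isPath_of_length_eq_dist _ hq⟩
  have hx_mem : x ∈ (q₁.append q₂).support :=
    hpq ▸ (Walk.mem_support_append_iff _ _).mpr (Or.inl p₁.end_mem_support)
  rcases (Walk.mem_support_append_iff _ _).mp hx_mem with h | h
  · exact Or.inl (q₁.dist_add_dist_of_mem_support hq₁ h)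
  · have := q₂.dist_add_dist_of_mem_support hq₂ h
    unfold AncIn at *
    omega

end AncIn

theorem SimpleGraph.Iso.ancIn_iff {V W : Type*} {G : SimpleGraph V} {G' : SimpleGraph W}
    (f : G ≃g G') {r x y : V} : AncIn G' (f r) (f x) (f y) ↔ AncIn G r x y := by
  simp only [AncIn, f.dist_eq]

theorem ancIn_pathGraph_zero {n : ℕ} {i j : Fin (n + 1)} (h : i ≤ j) :
    AncIn (pathGraph (n + 1)) 0 i j := by
  simp only [AncIn, pathGraph_dist_of_le (Fin.zero_le i), pathGraph_dist_of_le (Fin.zero_le j),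
    pathGraph_dist_of_le h, Fin.val_zero]
  rw [Fin.le_def] at h
  omega

namespace TreeLayout

variable {V : Type*} {G : SimpleGraph V}

def ofEquivFin {n : ℕ} (G : SimpleGraph V) (e : V ≃ Fin (n + 1)) : TreeLayout G where
  tree := (pathGraph (n + 1)).comap e
  isTree := (Iso.comap e _).isTree_iff.mpr (pathGraph_isTree n)
  root := e.symm 0
  layout x y _ := by
    simp only [← (Iso.comap e _).ancIn_iff, Iso.comap_apply, Equiv.apply_symm_apply]
    exact (le_total (e x) (e y)).imp ancIn_pathGraph_zero ancIn_pathGraph_zero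

theorem nonempty_of_finite [Finite V] [Nonempty V] (G : SimpleGraph V) :
    Nonempty (TreeLayout G) := by
  obtain ⟨n, ⟨e⟩⟩ := Finite.exists_equiv_fin V
  cases n with
  | zero => exact (IsEmpty.false (e (Classical.arbitrary V))).elim
  | succ n => exact ⟨ofEquivFin G e⟩

theorem exists_bandwidthLE [Finite V] (L : TreeLayout G) : ∃ k, L.BandwidthLE k := by
  obtain ⟨k, hk⟩ := (Set.finite_range fun q : V × V => L.tree.dist q.1 q.2).bddAbove
  exact ⟨k, fun x y _ => hk ⟨(x, y), rfl⟩⟩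

theorem BandwidthLE.mono {L : TreeLayout G} {k k' : ℕ} (hL : L.BandwidthLE k) (hk : k ≤ k') :
    L.BandwidthLE k' :=
  fun _ _ hxy => (hL hxy).trans hk

section Depth

variable (L : TreeLayout G)

noncomputable def depth (v : V) : ℕ := L.tree.dist L.root v

theorem depth_le_add_of_adj {k : ℕ} (hL : L.BandwidthLE k) {x y : V} (hxy : G.Adj x y) :
    L.depth y ≤ L.depth x + k := by
  have hxy' := hL hxy
  have hyx := (dist_comm (G := L.tree)).trans_le hxy'
  rcases L.layout hxy with h | h <;> unfold AncIn at h <;> unfold depth <;> omega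

theorem anc_of_anc_of_adj {x a c : V} (hxa : L.Anc x a) (hac : G.Adj a c)
    (hdepth : L.depth x ≤ L.depth c) : L.Anc x c := by
  rcases L.layout hac with h | h
  · exact hxa.trans L.isTree.connected h
  · rcases L.isTree.ancIn_total hxa h with h' | h'
    · exact h'
    · rw [h'.eq_of_dist_le L.isTree.connected hdepth]
      exact ancIn_refl _ _ _

theorem anc_of_forall_depth_le {S : Set V} (hS : (G.induce S).Preconnected) {x : V}
    (hx : x ∈ S) (hmin : ∀ z ∈ S, L.depth x ≤ L.depth z) {y : V} (hy : y ∈ S) : L.Anc x y := by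
  obtain ⟨p⟩ := hS ⟨x, hx⟩ ⟨y, hy⟩
  by_contra hxy
  obtain ⟨d, -, hd, hd'⟩ :=
    p.exists_boundary_dart {z | L.Anc x z} (ancIn_refl _ _ x) hxy
  exact hd' (L.anc_of_anc_of_adj hd d.adj (hmin _ d.snd.2))

theorem isPCenteredColoring_depth_mod [Finite V] {k : ℕ} (hL : L.BandwidthLE k) (p : ℕ) :
    IsPCenteredColoring G p fun v => L.depth v % (p * k + 1) := by
  intro S hS hconn
  obtain ⟨x, hxS, hmin⟩ := S.exists_min_image L.depth S.toFinite hS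
  by_cases hunique : ∀ y ∈ S, L.depth y % (p * k + 1) = L.depth x % (p * k + 1) → y = x
  · exact Or.inr ⟨x, hxS, hunique⟩
  push Not at hunique
  obtain ⟨y, hyS, hcol, hyx⟩ := hunique
  have hxy := L.anc_of_forall_depth_le hconn.preconnected hxS hmin hyS
  have hfar : L.depth x + (p * k + 1) ≤ L.depth y := by
    by_contra! hnear
    have := Nat.mod_injOn_Ico (L.depth x) (p * k + 1) (by simp) (by simp [hmin y hyS, hnear])
      hcol.symm
    exact hyx (hxy.eq_of_dist_le L.isTree.connected this.ge).symm
  obtain ⟨w⟩ := hconn.preconnected ⟨x, hxS⟩ ⟨y, hyS⟩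
  have hgap : ∀ j < p, ∃ r ∈ L.depth '' S,
      L.depth x + j * k < r ∧ r ≤ L.depth x + j * k + k := by
    intro j hj
    have : j * k ≤ p * k := Nat.mul_le_mul_right k hj.le
    obtain ⟨z, -, hz₁, hz₂⟩ := w.exists_mem_support_Ico (f := L.depth ∘ Subtype.val)
      (fun u v huv => L.depth_le_add_of_adj hL huv) (s := L.depth x + j * k + 1)
      (by simp) (by simp only [Function.comp_apply]; omega)
    simp only [Function.comp_apply] at hz₁ hz₂
    exact ⟨_, ⟨z.1, z.2, rfl⟩, by omega, by omega⟩
  left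
  rw [← Set.image_image (· % (p * k + 1)) L.depth S]
  exact Nat.le_ncard_image_mod (S.toFinite.image _) ⟨x, hxS, rfl⟩ hgap

end Depth

end TreeLayout

theorem exists_bandwidthLE_treebandwidth {V : Type*} [Finite V] [Nonempty V]
    (G : SimpleGraph V) : ∃ L : TreeLayout G, L.BandwidthLE (treebandwidth G) := by
  obtain ⟨L⟩ := TreeLayout.nonempty_of_finite G
  obtain ⟨k, hk⟩ := L.exists_bandwidthLE
  exact Nat.sInf_mem (s := {k | ∃ L : TreeLayout G, L.BandwidthLE k}) ⟨k, L, hk⟩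

theorem pCentered_of_treebandwidth_general {V : Type*} [Fintype V] (G : SimpleGraph V) (k : ℕ)
    (h : treebandwidth G ≤ k) (p : ℕ) :
    ∃ c : V → ℕ, (Set.range c).ncard ≤ p * k + 1 ∧ IsPCenteredColoring G p c := by
  cases isEmpty_or_nonempty V
  · exact ⟨fun _ => 0, by simp [Set.range_eq_empty],
      fun S hS => (hS.ne_empty S.eq_empty_of_isEmpty).elim⟩
  obtain ⟨L, hL⟩ := exists_bandwidthLE_treebandwidth G
  exact ⟨_, ncard_range_mod_le _ (p * k).succ_pos, L.isPCenteredColoring_depth_mod (hL.mono h) p⟩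

/-- a graph of treebandwidth at most `k` has a `p`-centered colouring
with at most `p·k + 1` colours. -/
theorem pCentered_of_treebandwidth {V : Type*} [Fintype V] (G : SimpleGraph V) (k : ℕ)
    (h : treebandwidth G ≤ k) (p : ℕ) (hp : 0 < p) :
    ∃ c : V → ℕ, (Set.range c).ncard ≤ p * k + 1 ∧ IsPCenteredColoring G p c :=
  pCentered_of_treebandwidth_general G k h p
end

section
/- Let G be a 3-connected graph, u a vertex of G, and v1, v2, v3 three distinct neighbours of u. Then G contains a subdivision of the 3-fan F_3 whose universal vertex is u and whose subdivided path visits v1, v2, v3 in this order (with v1, v2, v3 the branch vertices of the path). -/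
open SimpleGraph

/-!
Deleting `u` from the 3-connected graph `G` leaves a 2-connected graph, so by the case `k = 2` of
Menger's theorem, applied in `G - u - v₂` between the neighbours of `v₂` and `{v₁, v₃}`, there are
paths `v₁ ⋯ v₂` and `v₂ ⋯ v₃` avoiding `u` that meet only in `v₂`. Together with the spokes
`uv₁, uv₂, uv₃` they form the fan.

Menger's theorem is proved by induction on the number of edges (Diestel, Thm. 3.3.1, first
proof): if the ends of an edge `xy` separate `A` from `B`, glue linkages `A → {x, y}` and
`{x, y} → B` found in `G - xy`; otherwise contract `xy`.
-/

namespace SimpleGraph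

variable {V W : Type*} {G : SimpleGraph V}

namespace Walk

def IsPathInto (X : Set V) {a d : V} (p : G.Walk a d) : Prop :=
  p.IsPath ∧ d ∈ X ∧ ∀ z ∈ p.support, z ∈ X → z = d

lemma exists_isPathInto [DecidableEq V] (X : Set V) {a b : V} (w : G.Walk a b) (hb : b ∈ X) :
    ∃ d, ∃ p : G.Walk a d, p.IsPathInto X ∧ p.support ⊆ w.support := by
  induction w with
  | nil => exact ⟨_, nil, ⟨.nil, hb, by simp⟩, List.Subset.refl _⟩
  | @cons a c b h w ih =>
    by_cases ha : a ∈ X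
    · exact ⟨a, nil, ⟨.nil, ha, by simp⟩, by simp⟩
    obtain ⟨d, p, ⟨-, hd, hpX⟩, hpw⟩ := ih hb
    refine ⟨d, (cons h p).bypass, ⟨bypass_isPath _, hd, fun z hz hzX => ?_⟩,
      List.Subset.trans (support_bypass_subset_support _) (List.cons_subset_cons _ hpw)⟩
    obtain rfl | hz := List.mem_cons.1 (support_bypass_subset_support _ hz)
    · exact absurd hzX ha
    · exact hpX z hz hzX

lemma exists_walk_map (f : V → W) {a b : V} (w : G.Walk a b) :
    ∃ w' : (G.map f).Walk (f a) (f b), ∀ z ∈ w'.support, ∃ t ∈ w.support, f t = z := by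
  induction w with
  | nil => exact ⟨nil, by simp⟩
  | @cons a c b h w ih =>
    obtain ⟨w', hw'⟩ := ih
    by_cases hf : f a = f c
    · refine ⟨w'.copy hf.symm rfl, fun z hz => ?_⟩
      obtain ⟨t, ht, rfl⟩ := hw' z (by simpa using hz)
      exact ⟨t, List.mem_cons_of_mem _ ht, rfl⟩
    · refine ⟨cons (map_adj_apply' h hf) w', fun z hz => ?_⟩
      obtain rfl | hz := List.mem_cons.1 hz
      · exact ⟨a, List.mem_cons_self, rfl⟩
      · obtain ⟨t, ht, rfl⟩ := hw' z hz
        exact ⟨t, List.mem_cons_of_mem _ ht, rfl⟩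

lemma exists_walk_of_map {f : V → W}
    (hfib : ∀ α β, f α = f β → ∃ p : G.Walk α β, ∀ z ∈ p.support, f z = f α)
    {a b : W} (w : (G.map f).Walk a b) {α β : V} (hα : f α = a) (hβ : f β = b) :
    ∃ p : G.Walk α β, ∀ z ∈ p.support, f z ∈ w.support := by
  induction w generalizing α with
  | nil =>
    obtain ⟨p, hp⟩ := hfib α β (hα.trans hβ.symm)
    exact ⟨p, fun z hz => by simp [hp z hz, hα]⟩
  | @cons a c b h w ih =>
    obtain ⟨-, α', γ, hadj, hα', rfl⟩ := h
    obtain ⟨q, hq⟩ := ih rfl hβ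
    obtain ⟨r, hr⟩ := hfib α α' (hα.trans hα'.symm)
    refine ⟨r.append (cons hadj q), fun z hz => ?_⟩
    rw [mem_support_append_iff, support_cons, List.mem_cons] at hz
    rcases hz with hz | rfl | hz
    · simp [hr z hz, hα]
    · simp [hα']
    · exact List.mem_cons_of_mem _ (hq z hz)

end Walk

lemma ncard_edgeSet_map_lt [Finite V] (f : V → W) {x y : V} (hxy : G.Adj x y)
    (hf : f x = f y) : (G.map f).edgeSet.ncard < G.edgeSet.ncard := by
  have hsub : (G.map f).edgeSet ⊆ Sym2.map f '' (G.edgeSet \ {s(x, y)}) := by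
    intro e he
    induction e using Sym2.ind with
    | _ a b =>
    obtain ⟨hab, a', b', hadj, rfl, rfl⟩ := he
    refine ⟨s(a', b'), ⟨hadj, fun h => hab ?_⟩, rfl⟩
    rcases Sym2.eq_iff.1 h with ⟨rfl, rfl⟩ | ⟨rfl, rfl⟩ <;> simp [hf]
  calc (G.map f).edgeSet.ncard
      ≤ (Sym2.map f '' (G.edgeSet \ {s(x, y)})).ncard := Set.ncard_le_ncard hsub (Set.toFinite _)
    _ ≤ (G.edgeSet \ {s(x, y)}).ncard := Set.ncard_image_le (Set.toFinite _)
    _ < G.edgeSet.ncard := Set.ncard_sdiff_singleton_lt_of_mem hxy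

def Separates (G : SimpleGraph V) (A B S : Set V) : Prop :=
  ∀ a ∈ A, ∀ b ∈ B, ∀ w : G.Walk a b, ∃ z ∈ w.support, z ∈ S

def HasTwoDisjointWalks (G : SimpleGraph V) (A B : Set V) : Prop :=
  ∃ a₁ ∈ A, ∃ a₂ ∈ A, ∃ b₁ ∈ B, ∃ b₂ ∈ B, ∃ (w₁ : G.Walk a₁ b₁) (w₂ : G.Walk a₂ b₂),
    w₁.support.Disjoint w₂.support

variable {A B S T X : Set V}

namespace Separates

lemma symm (h : G.Separates A B S) : G.Separates B A S := fun b hb a ha w => by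
  simpa using h a ha b hb w.reverse

lemma mono (h : G.Separates A B S) (hST : S ⊆ T) : G.Separates A B T := fun a ha b hb w =>
  let ⟨z, hz, hzS⟩ := h a ha b hb w
  ⟨z, hz, hST hzS⟩

lemma of_map {f : V → W} {T : Set W} (h : (G.map f).Separates (f '' A) (f '' B) T) :
    G.Separates A B (f ⁻¹' T) := by
  intro a ha b hb w
  obtain ⟨w', hw'⟩ := w.exists_walk_map f
  obtain ⟨z, hz, hzT⟩ := h _ ⟨a, ha, rfl⟩ _ ⟨b, hb, rfl⟩ w'
  obtain ⟨t, ht, rfl⟩ := hw' z hz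
  exact ⟨t, ht, hzT⟩

lemma of_deleteEdges [DecidableEq V] {x y : V} (hxy : x ≠ y) (h : G.Separates A B {x, y})
    (hT : (G.deleteEdges {s(x, y)}).Separates A {x, y} T) : G.Separates A B T := by
  intro a ha b hb w
  obtain ⟨z, hz, hzX⟩ := h a ha b hb w
  obtain ⟨d, p, ⟨-, hd, hpX⟩, hpw⟩ := (w.takeUntil z hz).exists_isPathInto {x, y} hzX
  have hp : ∀ e ∈ p.edges, e ∉ ({s(x, y)} : Set (Sym2 V)) := by
    rintro e he rfl
    exact hxy ((hpX x (p.fst_mem_support_of_mem_edges he) (by simp)).trans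
      (hpX y (p.snd_mem_support_of_mem_edges he) (by simp)).symm)
  obtain ⟨t, ht, htT⟩ := hT a ha d hd (p.toDeleteEdges _ hp)
  exact ⟨t, w.support_takeUntil_subset_support hz (hpw (by simpa using ht)), htT⟩

lemma support_disjoint_of_isPathInto [DecidableEq V] (h : G.Separates A B X) {a b d e : V}
    (ha : a ∈ A) (hb : b ∈ B) (hde : d ≠ e) {p : G.Walk a d} {q : G.Walk b e}
    (hp : p.IsPathInto X) (hq : q.IsPathInto X) : p.support.Disjoint q.support := by
  intro z hzp hzq
  -- going along `p` to `z` and back along `q` is an `A`–`B` walk, which meets `X` only in `d`, `e`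
  have hz : z = d ∨ z = e := by
    obtain ⟨t, ht, htX⟩ := h a ha b hb ((p.takeUntil z hzp).append (q.takeUntil z hzq).reverse)
    rw [Walk.mem_support_append_iff, Walk.support_reverse, List.mem_reverse] at ht
    rcases ht with ht | ht
    · refine .inl (by_contra fun hzd => Walk.endpoint_notMem_support_takeUntil hp.1 hzp
        (Ne.symm hzd) ?_)
      exact hp.2.2 t (p.support_takeUntil_subset_support hzp ht) htX ▸ ht
    · refine .inr (by_contra fun hze => Walk.endpoint_notMem_support_takeUntil hq.1 hzq
        (Ne.symm hze) ?_)
      exact hq.2.2 t (q.support_takeUntil_subset_support hzq ht) htX ▸ ht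
  rcases hz with rfl | rfl
  · exact hde (hq.2.2 z hzq hp.2.1)
  · exact hde (hp.2.2 z hzp hq.2.1).symm

end Separates

namespace HasTwoDisjointWalks

lemma mono {H : SimpleGraph V} (h : H.HasTwoDisjointWalks A B) (hHG : H ≤ G) :
    G.HasTwoDisjointWalks A B := by
  obtain ⟨a₁, ha₁, a₂, ha₂, b₁, hb₁, b₂, hb₂, w₁, w₂, hw⟩ := h
  exact ⟨a₁, ha₁, a₂, ha₂, b₁, hb₁, b₂, hb₂, w₁.mapLe hHG, w₂.mapLe hHG, by simpa using hw⟩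

lemma exists_isPathInto [DecidableEq V] (h : G.HasTwoDisjointWalks A X) :
    ∃ a₁ ∈ A, ∃ a₂ ∈ A, ∃ d₁ d₂, ∃ (p₁ : G.Walk a₁ d₁) (p₂ : G.Walk a₂ d₂),
      p₁.IsPathInto X ∧ p₂.IsPathInto X ∧ p₁.support.Disjoint p₂.support := by
  obtain ⟨a₁, ha₁, a₂, ha₂, b₁, hb₁, b₂, hb₂, w₁, w₂, hw⟩ := h
  obtain ⟨d₁, p₁, hp₁, hpw₁⟩ := w₁.exists_isPathInto X hb₁
  obtain ⟨d₂, p₂, hp₂, hpw₂⟩ := w₂.exists_isPathInto X hb₂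
  exact ⟨a₁, ha₁, a₂, ha₂, d₁, d₂, p₁, p₂, hp₁, hp₂, fun z hz₁ hz₂ => hw (hpw₁ hz₁) (hpw₂ hz₂)⟩

lemma of_edgeSet_eq_empty (hE : G.edgeSet = ∅) (h : ∀ S, G.Separates A B S → 2 ≤ S.ncard) :
    G.HasTwoDisjointWalks A B := by
  have hAB : 1 < (A ∩ B).ncard := h _ fun a ha b hb w => by
    cases w with
    | nil => exact ⟨a, by simp, ha, hb⟩
    | cons hadj _ => exact absurd (G.mem_edgeSet.2 hadj) (hE ▸ Set.notMem_empty _)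
  obtain ⟨a, ha⟩ := Set.nonempty_of_ncard_ne_zero (by omega : (A ∩ B).ncard ≠ 0)
  obtain ⟨b, hb, hba⟩ := Set.exists_ne_of_one_lt_ncard hAB a
  exact ⟨a, ha.1, b, hb.1, a, ha.2, b, hb.2, .nil, .nil, by simpa using hba⟩

lemma of_isPathInto [DecidableEq V] (hX : G.Separates A B X) {a₁ a₂ b₁ b₂ d₁ d₂ : V}
    (ha₁ : a₁ ∈ A) (ha₂ : a₂ ∈ A) (hb₁ : b₁ ∈ B) (hb₂ : b₂ ∈ B) (hd : d₁ ≠ d₂)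
    {p₁ : G.Walk a₁ d₁} {p₂ : G.Walk a₂ d₂} {q₁ : G.Walk b₁ d₁} {q₂ : G.Walk b₂ d₂}
    (hp₁ : p₁.IsPathInto X) (hp₂ : p₂.IsPathInto X) (hq₁ : q₁.IsPathInto X)
    (hq₂ : q₂.IsPathInto X) (hp : p₁.support.Disjoint p₂.support)
    (hq : q₁.support.Disjoint q₂.support) : G.HasTwoDisjointWalks A B := by
  refine ⟨a₁, ha₁, a₂, ha₂, b₁, hb₁, b₂, hb₂, p₁.append q₁.reverse, p₂.append q₂.reverse,
    fun z hz₁ hz₂ => ?_⟩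
  simp only [Walk.mem_support_append_iff, Walk.support_reverse, List.mem_reverse] at hz₁ hz₂
  rcases hz₁ with hz₁ | hz₁ <;> rcases hz₂ with hz₂ | hz₂
  · exact hp hz₁ hz₂
  · exact hX.support_disjoint_of_isPathInto ha₁ hb₂ hd hp₁ hq₂ hz₁ hz₂
  · exact hX.support_disjoint_of_isPathInto ha₂ hb₁ hd.symm hp₂ hq₁ hz₂ hz₁
  · exact hq hz₁ hz₂

lemma of_separates_pair [DecidableEq V] {x y : V} (hX : G.Separates A B {x, y})
    (hA : G.HasTwoDisjointWalks A {x, y}) (hB : G.HasTwoDisjointWalks B {x, y}) :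
    G.HasTwoDisjointWalks A B := by
  obtain ⟨a₁, ha₁, a₂, ha₂, d₁, d₂, p₁, p₂, hp₁, hp₂, hp⟩ := hA.exists_isPathInto
  obtain ⟨b₁, hb₁, b₂, hb₂, e₁, e₂, q₁, q₂, hq₁, hq₂, hq⟩ := hB.exists_isPathInto
  have hd : d₁ ≠ d₂ := fun h => hp p₁.end_mem_support (h ▸ p₂.end_mem_support)
  have he : e₁ ≠ e₂ := fun h => hq q₁.end_mem_support (h ▸ q₂.end_mem_support)
  have hde : (e₁ = d₁ ∧ e₂ = d₂) ∨ (e₁ = d₂ ∧ e₂ = d₁) := by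
    have := hp₁.2.1; have := hp₂.2.1; have := hq₁.2.1; have := hq₂.2.1
    simp only [Set.mem_insert_iff, Set.mem_singleton_iff] at *
    grind
  rcases hde with ⟨rfl, rfl⟩ | ⟨rfl, rfl⟩
  · exact of_isPathInto hX ha₁ ha₂ hb₁ hb₂ hd hp₁ hp₂ hq₁ hq₂ hp hq
  · exact of_isPathInto hX ha₁ ha₂ hb₂ hb₁ hd hp₁ hp₂ hq₂ hq₁ hp hq.symm

lemma of_map {f : V → W}
    (hfib : ∀ α β, f α = f β → ∃ p : G.Walk α β, ∀ z ∈ p.support, f z = f α)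
    (h : (G.map f).HasTwoDisjointWalks (f '' A) (f '' B)) : G.HasTwoDisjointWalks A B := by
  obtain ⟨_, ⟨α₁, hα₁, rfl⟩, _, ⟨α₂, hα₂, rfl⟩, _, ⟨β₁, hβ₁, rfl⟩, _, ⟨β₂, hβ₂, rfl⟩,
    w₁, w₂, hw⟩ := h
  obtain ⟨p₁, hp₁⟩ := w₁.exists_walk_of_map hfib rfl rfl
  obtain ⟨p₂, hp₂⟩ := w₂.exists_walk_of_map hfib rfl rfl
  exact ⟨α₁, hα₁, α₂, hα₂, β₁, hβ₁, β₂, hβ₂, p₁, p₂, fun z hz₁ hz₂ => hw (hp₁ z hz₁) (hp₂ z hz₂)⟩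

end HasTwoDisjointWalks

section Merge

variable [DecidableEq V] {x y : V}

/-- `G.map (merge x y)` is `G` with the edge `xy` contracted onto `x`, `y` becoming isolated. -/
def merge (x y z : V) : V := if z = y then x else z

lemma exists_walk_of_merge_eq (hxy : G.Adj x y) {α β : V} (h : merge x y α = merge x y β) :
    ∃ p : G.Walk α β, ∀ z ∈ p.support, merge x y z = merge x y α := by
  by_cases hαβ : α = β
  · subst hαβ
    exact ⟨.nil, by simp⟩
  have hne := hxy.ne
  have : (α = x ∧ β = y) ∨ (α = y ∧ β = x) := by
    unfold merge at h
    split_ifs at h <;> grind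
  rcases this with ⟨rfl, rfl⟩ | ⟨rfl, rfl⟩
  · exact ⟨hxy.toWalk, by simp [merge, hne]⟩
  · exact ⟨hxy.symm.toWalk, by simp [merge, hne]⟩

lemma two_le_ncard_of_separates_map_merge [Finite V]
    (hsep : ∀ S, G.Separates A B S → 2 ≤ S.ncard) (hxy : ¬ G.Separates A B {x, y})
    (hT : (G.map (merge x y)).Separates (merge x y '' A) (merge x y '' B) T) :
    2 ≤ T.ncard := by
  have hS : 1 < (merge x y ⁻¹' T).ncard := hsep _ hT.of_map
  obtain ⟨t, htT, htxy⟩ : ∃ t ∈ merge x y ⁻¹' T, t ∉ ({x, y} : Set V) := by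
    by_contra! hsub
    exact hxy (hT.of_map.mono hsub)
  -- `{x, y}` is the only fibre of `merge x y` with two points
  obtain ⟨t', ht'T, ht't⟩ := Set.exists_ne_of_one_lt_ncard hS t
  simp only [Set.mem_insert_iff, Set.mem_singleton_iff, not_or] at htxy
  have ht : merge x y t = t := if_neg htxy.2
  have ht' : merge x y t' ≠ t := by
    unfold merge
    split_ifs <;> grind
  calc 2 = ({t, merge x y t'} : Set V).ncard := (Set.ncard_pair ht'.symm).symm
    _ ≤ T.ncard := Set.ncard_le_ncard (by
        rintro z (rfl | rfl)
        · simpa [ht] using htT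
        · exact ht'T) (Set.toFinite _)

end Merge

theorem hasTwoDisjointWalks_of_forall_separates [Finite V]
    (h : ∀ S, G.Separates A B S → 2 ≤ S.ncard) : G.HasTwoDisjointWalks A B := by
  classical
  induction hn : G.edgeSet.ncard using Nat.strong_induction_on generalizing G A B with
  | _ n ih =>
  obtain hE | ⟨e, he⟩ := G.edgeSet.eq_empty_or_nonempty
  · exact .of_edgeSet_eq_empty hE h
  induction e using Sym2.ind with
  | _ x y =>
  have hxy : G.Adj x y := he
  by_cases hX : G.Separates A B {x, y}
  · have hlt : (G.deleteEdges {s(x, y)}).edgeSet.ncard < n := by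
      rw [edgeSet_deleteEdges, ← hn]
      exact Set.ncard_sdiff_singleton_lt_of_mem he
    refine .of_separates_pair hX (.mono (ih _ hlt (fun T hT => h T ?_) rfl) (deleteEdges_le _))
      (.mono (ih _ hlt (fun T hT => h T ?_) rfl) (deleteEdges_le _))
    · exact hX.of_deleteEdges hxy.ne hT
    · exact (hX.symm.of_deleteEdges hxy.ne hT).symm
  · exact .of_map (fun _ _ => exists_walk_of_merge_eq hxy)
      (ih _ (hn ▸ ncard_edgeSet_map_lt _ hxy (by simp [merge, hxy.ne]))
        (fun T hT => two_le_ncard_of_separates_map_merge h hX hT) rfl)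

namespace Walk

lemma notMem_support_of_deleteIncidenceSet {x a b : V} (w : (G.deleteIncidenceSet x).Walk a b)
    (ha : a ≠ x) : x ∉ w.support := by
  induction w with
  | nil => simpa using ha.symm
  | cons h _ ih =>
    simp only [support_cons, List.mem_cons, not_or]
    exact ⟨ha.symm, ih (deleteIncidenceSet_adj.1 h).2.2⟩

lemma exists_deleteIncidenceSet {x a b : V} (w : G.Walk a b) (hx : x ∉ w.support) :
    ∃ w' : (G.deleteIncidenceSet x).Walk a b, w'.support = w.support :=
  ⟨w.toDeleteEdges _ fun _ he hex => hx (w.mem_support_of_mem_edges he hex.2),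
    support_transfer _ _⟩

lemma exists_isPath_cons {u v a b : V}
    (w : ((G.deleteIncidenceSet u).deleteIncidenceSet v).Walk a b) (hvu : v ≠ u) (hva : G.Adj v a)
    (hau : a ≠ u) :
    ∃ p : G.Walk v b, p.IsPath ∧ u ∉ p.support ∧ p.support ⊆ v :: w.support := by
  classical
  have hwu : u ∉ w.support := by
    simpa using (w.mapLe (deleteIncidenceSet_le _ v)).notMem_support_of_deleteIncidenceSet hau
  let w' : G.Walk a b := w.mapLe ((deleteIncidenceSet_le _ _).trans (deleteIncidenceSet_le _ _))
  have hsub : (cons hva w').bypass.support ⊆ v :: w.support :=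
    List.Subset.trans (support_bypass_subset_support _) (by simp [w'])
  refine ⟨_, bypass_isPath _, fun hu => ?_, hsub⟩
  rcases List.mem_cons.1 (hsub hu) with h | h
  exacts [hvu h.symm, hwu h]

end Walk

end SimpleGraph

namespace ThreeConnected

variable {V : Type*} {G : SimpleGraph V} {u v1 v2 v3 : V}

lemma finite (hG : ThreeConnected G) : Finite V :=
  Nat.finite_of_card_ne_zero (by have := hG.1; omega)

lemma exists_walk (hG : ThreeConnected G) {x y s t : V} (hs : s ≠ x ∧ s ≠ y)
    (ht : t ≠ x ∧ t ≠ y) : ∃ w : G.Walk s t, x ∉ w.support ∧ y ∉ w.support := by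
  obtain ⟨w⟩ := (hG.2 x y).preconnected ⟨s, hs⟩ ⟨t, ht⟩
  let w' : G.Walk s t := w.map (Embedding.induce _).toHom
  have hw' : w'.support = w.support.map Subtype.val := Walk.support_map _ _
  refine ⟨w', ?_, ?_⟩ <;> rw [hw', List.mem_map] <;> rintro ⟨z, -, hz⟩
  exacts [z.2.1 hz, z.2.2 hz]

lemma exists_walk_deleteIncidenceSet (hG : ThreeConnected G) (h2 : G.Adj u v2) {z t : V}
    (hz : z ≠ v2) (htu : t ≠ u) (htz : t ≠ z) (htv : t ≠ v2) :
    ∃ a ∈ G.neighborSet v2 \ {u}, ∃ q : ((G.deleteIncidenceSet u).deleteIncidenceSet v2).Walk a t,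
      z ∉ q.support := by
  classical
  obtain ⟨w, hwu, hwz⟩ := hG.exists_walk (x := u) (y := z) ⟨h2.ne', hz.symm⟩ ⟨htu, htz⟩
  have hp : w.bypass.IsPath := w.bypass_isPath
  have hsub := w.support_bypass_subset_support
  generalize w.bypass = p at hp hsub
  cases p with
  | nil => exact absurd rfl htv
  | @cons _ a _ hadj q =>
    rw [Walk.cons_isPath_iff] at hp
    have hqu : u ∉ q.support := fun h => hwu (hsub (List.mem_cons_of_mem _ h))
    obtain ⟨q₁, hq₁⟩ := q.exists_deleteIncidenceSet hqu
    obtain ⟨q₂, hq₂⟩ := q₁.exists_deleteIncidenceSet (hq₁ ▸ hp.2)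
    refine ⟨a, ⟨hadj, fun h => hqu (h ▸ q.start_mem_support)⟩, q₂, ?_⟩
    rw [hq₂, hq₁]
    exact fun h => hwz (hsub (List.mem_cons_of_mem _ h))

lemma two_le_ncard_of_separates (hG : ThreeConnected G) (h1 : G.Adj u v1)
    (h2 : G.Adj u v2) (h3 : G.Adj u v3) (h12 : v1 ≠ v2) (h13 : v1 ≠ v3) (h23 : v2 ≠ v3)
    {S : Set V} (hS : ((G.deleteIncidenceSet u).deleteIncidenceSet v2).Separates
      (G.neighborSet v2 \ {u}) {v1, v3} S) : 2 ≤ S.ncard := by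
  have := hG.finite
  by_contra! hlt
  have hS1 : S.Subsingleton := Set.ncard_le_one_iff_subsingleton.1 (by omega)
  obtain ⟨z, hzv, hSz⟩ : ∃ z, z ≠ v2 ∧ S ⊆ {z, v2} := by
    by_cases hs : ∃ s ∈ S, s ≠ v2
    · obtain ⟨s, hs, hsv⟩ := hs
      exact ⟨s, hsv, fun t ht => Or.inl (hS1 ht hs)⟩
    · push Not at hs
      exact ⟨u, h2.ne, fun t ht => Or.inr (hs t ht)⟩
  obtain ⟨t, htB, htz, htu, htv⟩ : ∃ t ∈ ({v1, v3} : Set V), t ≠ z ∧ t ≠ u ∧ t ≠ v2 := by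
    by_cases hz1 : z = v1
    · exact ⟨v3, by simp, hz1 ▸ h13.symm, h3.ne', h23.symm⟩
    · exact ⟨v1, by simp, Ne.symm hz1, h1.ne', h12⟩
  obtain ⟨a, ha, q, hqz⟩ := hG.exists_walk_deleteIncidenceSet h2 hzv htu htz htv
  obtain ⟨s, hs, hsS⟩ := hS a ha t htB q
  rcases hSz hsS with rfl | rfl
  · exact hqz hs
  · exact q.notMem_support_of_deleteIncidenceSet ha.1.ne' hs

lemma exists_fan_paths (hG : ThreeConnected G)
    (h1 : G.Adj u v1) (h2 : G.Adj u v2) (h3 : G.Adj u v3)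
    (h12 : v1 ≠ v2) (h13 : v1 ≠ v3) (h23 : v2 ≠ v3) :
    ∃ (P : G.Walk v1 v2) (Q : G.Walk v2 v3), P.IsPath ∧ Q.IsPath ∧
      u ∉ P.support ∧ u ∉ Q.support ∧ v3 ∉ P.support ∧ v1 ∉ Q.support ∧
      ∀ z ∈ P.support, z ∈ Q.support → z = v2 := by
  have := hG.finite
  obtain ⟨a₁, ha₁, a₂, ha₂, b₁, hb₁, b₂, hb₂, w₁, w₂, hw⟩ :=
    hasTwoDisjointWalks_of_forall_separates fun S hS =>
      hG.two_le_ncard_of_separates h1 h2 h3 h12 h13 h23 hS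
  have hb : b₁ ≠ b₂ := fun h => hw w₁.end_mem_support (h ▸ w₂.end_mem_support)
  wlog hb₁v : b₁ = v1 generalizing a₁ a₂ b₁ b₂
  · refine this a₂ ha₂ a₁ ha₁ b₂ hb₂ b₁ hb₁ w₂ w₁ hw.symm hb.symm ?_
    simp only [Set.mem_insert_iff, Set.mem_singleton_iff] at hb₁ hb₂
    exact hb₂.resolve_right fun h => hb ((hb₁.resolve_left hb₁v).trans h.symm)
  obtain rfl : b₂ = v3 := by
    simp only [Set.mem_insert_iff, Set.mem_singleton_iff] at hb₂
    exact hb₂.resolve_left (hb₁v ▸ hb.symm)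
  subst hb₁v
  obtain ⟨p₁, hp₁, hup₁, hsub₁⟩ := w₁.exists_isPath_cons h2.ne' ha₁.1 ha₁.2
  obtain ⟨p₂, hp₂, hup₂, hsub₂⟩ := w₂.exists_isPath_cons h2.ne' ha₂.1 ha₂.2
  have hp : ∀ z ∈ p₁.support, z ∈ p₂.support → z = v2 := fun z hz₁ hz₂ => by
    rcases List.mem_cons.1 (hsub₁ hz₁) with rfl | hz₁
    · rfl
    rcases List.mem_cons.1 (hsub₂ hz₂) with rfl | hz₂
    · rfl
    exact absurd hz₂ (hw hz₁)
  refine ⟨p₁.reverse, p₂, hp₁.reverse, hp₂, by simpa using hup₁, hup₂, fun h => ?_,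
    fun h => h12 (hp _ p₁.end_mem_support h), fun z hz₁ => hp z (by simpa using hz₁)⟩
  exact h23 (hp _ (by simpa using h) p₂.end_mem_support).symm

end ThreeConnected

section FanThree

variable {V : Type*} {G : SimpleGraph V} {u v1 v2 v3 : V}

def fan3Seg (P : G.Walk v1 v2) (Q : G.Walk v2 v3) :
    ∀ (i : Fin 3) (h : (i : ℕ) + 1 < 3), G.Walk (![v1, v2, v3] i) (![v1, v2, v3] ⟨i + 1, h⟩)
  | ⟨0, _⟩, _ => P
  | ⟨1, _⟩, _ => Q

lemma fan3Seg_spec {P : G.Walk v1 v2} {Q : G.Walk v2 v3} (hP : P.IsPath) (hQ : Q.IsPath)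
    (huP : u ∉ P.support) (huQ : u ∉ Q.support) (h3P : v3 ∉ P.support) (h1Q : v1 ∉ Q.support)
    (i : Fin 3) (h : (i : ℕ) + 1 < 3) :
    (fan3Seg P Q i h).IsPath ∧ u ∉ (fan3Seg P Q i h).support ∧
      ∀ j, ![v1, v2, v3] j ∈ (fan3Seg P Q i h).support → j = i ∨ (j : ℕ) = i + 1 := by
  match i, h with
  | ⟨0, _⟩, _ =>
    refine ⟨hP, huP, fun j (hj : _ ∈ P.support) => ?_⟩
    fin_cases j <;> simp_all
  | ⟨1, _⟩, _ =>
    refine ⟨hQ, huQ, fun j (hj : _ ∈ Q.support) => ?_⟩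
    fin_cases j <;> simp_all

lemma exists_fanSubdivision_three_of_paths (h1 : G.Adj u v1) (h2 : G.Adj u v2)
    (h3 : G.Adj u v3) (h12 : v1 ≠ v2) (h13 : v1 ≠ v3) (h23 : v2 ≠ v3)
    {P : G.Walk v1 v2} {Q : G.Walk v2 v3} (hP : P.IsPath) (hQ : Q.IsPath)
    (huP : u ∉ P.support) (huQ : u ∉ Q.support) (h3P : v3 ∉ P.support) (h1Q : v1 ∉ Q.support)
    (hPQ : ∀ z ∈ P.support, z ∈ Q.support → z = v2) :
    ∃ F : FanSubdivision G u 3, F.b 0 = v1 ∧ F.b 1 = v2 ∧ F.b 2 = v3 := by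
  set b : Fin 3 → V := ![v1, v2, v3]
  have hadj : ∀ i, G.Adj u (b i) := by
    intro i
    fin_cases i <;> assumption
  have hseg := fan3Seg_spec hP hQ huP huQ h3P h1Q
  refine ⟨{
    b := b
    binj := ?_
    bne := fun i => (hadj i).ne'
    spoke := fun i => (hadj i).toWalk
    spokePath := fun i => (hadj i).isPath_toWalk
    seg := fan3Seg P Q
    segPath := fun i h => (hseg i h).1
    vNotinSeg := fun i h => (hseg i h).2.1
    spokeDisj := ?_
    spokeSegDisj := ?_
    segDisj := ?_ }, rfl, rfl, rfl⟩
  · intro i j hij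
    fin_cases i <;> fin_cases j <;> simp_all [b]
  · intro i j hij
    have hbij : b i ≠ b j := fun h => hij (by fin_cases i <;> fin_cases j <;> simp_all [b])
    ext z
    simp only [Set.mem_inter_iff, Set.mem_ofPred_eq, Adj.support_toWalk, List.mem_cons,
      List.not_mem_nil, or_false, Set.mem_singleton_iff]
    grind
  · intro i j h z ⟨hzi, hzj⟩
    simp only [Set.mem_ofPred_eq, Adj.support_toWalk, List.mem_cons, List.not_mem_nil,
      or_false] at hzi hzj
    obtain rfl | rfl := hzi
    · exact absurd hzj (hseg j h).2.1
    · obtain hij | hij := (hseg j h).2.2 i hzj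
      · exact ⟨rfl, Or.inl (congrArg b hij)⟩
      · exact ⟨rfl, Or.inr (congrArg b (Fin.ext (b := ⟨j + 1, h⟩) hij))⟩
  · intro i j hi hj hij z ⟨hzi, hzj⟩
    match i, j, hi, hj with
    | ⟨0, _⟩, ⟨0, _⟩, _, _ | ⟨1, _⟩, ⟨1, _⟩, _, _ => exact absurd rfl hij
    | ⟨0, _⟩, ⟨1, _⟩, _, _ => obtain rfl := hPQ z hzi hzj; simp [b]
    | ⟨1, _⟩, ⟨0, _⟩, _, _ => obtain rfl := hPQ z hzj hzi; simp [b]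

end FanThree

/-- in a 3-connected graph, any vertex together with three prescribed
neighbours is the center of a subdivided 3-fan visiting them in order. -/
theorem ordered_fan3_of_threeConnected {V : Type*} (G : SimpleGraph V)
    (hG : ThreeConnected G) (u v1 v2 v3 : V)
    (h1 : G.Adj u v1) (h2 : G.Adj u v2) (h3 : G.Adj u v3)
    (h12 : v1 ≠ v2) (h13 : v1 ≠ v3) (h23 : v2 ≠ v3) :
    ∃ F : FanSubdivision G u 3, F.b 0 = v1 ∧ F.b 1 = v2 ∧ F.b 2 = v3 := by
  obtain ⟨P, Q, hP, hQ, huP, huQ, h3P, h1Q, hPQ⟩ := hG.exists_fan_paths h1 h2 h3 h12 h13 h23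
  exact exists_fanSubdivision_three_of_paths h1 h2 h3 h12 h13 h23 hP hQ huP huQ h3P h1Q hPQ
end
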